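/- arXiv:0902.3690 — 4 statements merged into one kernel-verified Lean document; each statement's English description precedes it below -/
import Mathlib

section
/- The all-zero-sum negative semidefiniteness of fiber intersection matrices implies: any proper subset S ⊊ {1,...,m} of components of a connected fiber has negative-definite intersection matrix. Precisely, if M is a symmetric m×m rational matrix with nonnegative off-diagonal entries, zero row sums, and connected support graph, then for any nonzero vector a supported on a proper subset of indices, aᵀMa < 0. -/
/-!
For a symmetric matrix with zero row sums, `2 aᵀMa = -∑ᵢⱼ Mᵢⱼ (aᵢ - aⱼ)²`, so nonnegative
off-diagonal entries make the form negative semidefinite, and it vanishes only if `a` is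
constant along every edge of the support graph. On a connected graph such an `a` is constant,
and a constant vector with a zero entry is zero.
-/

open Matrix

theorem SimpleGraph.Connected.exists_adj_apply_ne {V α : Type*} {G : SimpleGraph V}
    (hG : G.Connected) {f : V → α} {u v : V} (huv : f u ≠ f v) :
    ∃ x y, G.Adj x y ∧ f x ≠ f y := by
  obtain ⟨d, -, hfst, hsnd⟩ := (hG u v).some.exists_boundary_dart {x | f x = f u} rfl huv.symm
  exact ⟨d.fst, d.snd, d.adj, fun h => hsnd (h.symm.trans hfst)⟩

namespace Matrix

variable {ι R : Type*} [Fintype ι]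

theorem two_mul_dotProduct_mulVec_eq_neg_sum_mul_sq_sub [CommRing R] {M : Matrix ι ι R}
    (hsym : M.IsSymm) (hrow : M *ᵥ (fun _ => 1) = 0) (a : ι → R) :
    2 * (a ⬝ᵥ M *ᵥ a) = -∑ i, ∑ j, M i j * (a i - a j) ^ 2 := by
  have hrow_sum (i : ι) : ∑ j, M i j = 0 := by
    simpa [mulVec, dotProduct] using congrFun hrow i
  have hcol_sum (j : ι) : ∑ i, M i j = 0 := by
    simpa only [hsym.apply] using hrow_sum j
  have hleft : ∑ i, ∑ j, M i j * a i ^ 2 = 0 := by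
    simp only [← Finset.sum_mul, hrow_sum, zero_mul, Finset.sum_const_zero]
  have hright : ∑ i, ∑ j, M i j * a j ^ 2 = 0 := by
    rw [Finset.sum_comm]
    simp only [← Finset.sum_mul, hcol_sum, zero_mul, Finset.sum_const_zero]
  have hexpand : ∑ i, ∑ j, M i j * (a i - a j) ^ 2 = ∑ i, ∑ j, M i j * a i ^ 2
      - 2 * (a ⬝ᵥ M *ᵥ a) + ∑ i, ∑ j, M i j * a j ^ 2 := by
    simp only [dotProduct, mulVec, Finset.mul_sum, ← Finset.sum_sub_distrib,
      ← Finset.sum_add_distrib]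
    exact Finset.sum_congr rfl fun i _ => Finset.sum_congr rfl fun j _ => by ring
  rw [hexpand, hleft, hright]
  ring

theorem sum_mul_sq_sub_pos [CommRing R] [LinearOrder R] [IsStrictOrderedRing R]
    {M : Matrix ι ι R} (hoff : ∀ i j, i ≠ j → 0 ≤ M i j) {a : ι → R} {x y : ι}
    (hxy : 0 < M x y) (ha : a x ≠ a y) :
    0 < ∑ i, ∑ j, M i j * (a i - a j) ^ 2 := by
  have hterm (i j : ι) : 0 ≤ M i j * (a i - a j) ^ 2 := by
    rcases eq_or_ne i j with rfl | hij
    · simp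
    · exact mul_nonneg (hoff i j hij) (sq_nonneg _)
  refine Finset.sum_pos' (fun i _ => Finset.sum_nonneg fun j _ => hterm i j)
    ⟨x, Finset.mem_univ x, Finset.sum_pos' (fun j _ => hterm x j) ⟨y, Finset.mem_univ y, ?_⟩⟩
  exact mul_pos hxy (sq_pos_of_ne_zero (sub_ne_zero.mpr ha))

end Matrix

theorem proper_subcurve_negative_definite_general
    {m : ℕ} (M : Matrix (Fin m) (Fin m) ℚ)
    (hsym : M.IsSymm)
    (hoff : ∀ i j : Fin m, i ≠ j → 0 ≤ M i j)
    (hrow : M.mulVec (fun _ => 1) = 0)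
    (hconn : (SimpleGraph.fromRel (fun i j => 0 < M i j)).Connected)
    (a : Fin m → ℚ) (ha : a ≠ 0) (hsupp : ∃ i, a i = 0) :
    dotProduct a (M.mulVec a) < 0 := by
  obtain ⟨k, hk⟩ := hsupp
  obtain ⟨i, hi⟩ : ∃ i, a i ≠ a k := by
    simpa [hk, funext_iff] using ha
  obtain ⟨x, y, hadj, hxy⟩ := hconn.exists_adj_apply_ne hi
  have hpos : 0 < M x y := by
    rcases (SimpleGraph.fromRel_adj _ x y).mp hadj |>.2 with h | h
    · exact h
    · rwa [hsym.apply]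
  have hform := two_mul_dotProduct_mulVec_eq_neg_sum_mul_sq_sub hsym hrow a
  linarith [sum_mul_sq_sub_pos hoff hpos hxy]

/-- Any proper subset of components of a connected fiber has negative-definite
intersection matrix: if `M` is symmetric with nonnegative off-diagonal entries,
zero row sums, and connected support graph, then for any nonzero vector `a`
vanishing at at least one index, `aᵀMa < 0`. -/
theorem proper_subcurve_negative_definite
    {m : ℕ} (hm : 0 < m) (M : Matrix (Fin m) (Fin m) ℚ)
    (hsym : M.IsSymm)
    (hoff : ∀ i j : Fin m, i ≠ j → 0 ≤ M i j)
    (hrow : M.mulVec (fun _ => 1) = 0)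
    (hconn : (SimpleGraph.fromRel (fun i j => 0 < M i j)).Connected)
    (a : Fin m → ℚ) (ha : a ≠ 0) (hsupp : ∃ i, a i = 0) :
    dotProduct a (M.mulVec a) < 0 :=
  proper_subcurve_negative_definite_general M hsym hoff hrow hconn a ha hsupp
end

section
/- Let R ⊆ k[[t₁]] ⊕ ... ⊕ k[[t_m]] be the complete local ring of a reduced curve singularity with m branches, and suppose its genus g(p) = δ(p) − m + 1 equals 0. Then R is isomorphic to the complete local ring of the rational m-fold point, k[[x₁,...,x_m]]/(x_i x_j : 1 ≤ i < j ≤ m), i.e. R consists exactly of all tuples (f₁,...,f_m) with f₁(0) = f₂(0) = ... = f_m(0). -/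
/-!
Taking constant terms identifies `(Fin m → k⟦t⟧) ⧸ A`, where `A` is the rational `m`-fold point,
with `k^m` modulo the diagonal, which has dimension `m - 1`. Since `R ⊆ A`, the quotient map
`(Fin m → k⟦t⟧) ⧸ R → (Fin m → k⟦t⟧) ⧸ A` is a surjection between spaces of the same finite
dimension `δ = m - 1`, hence injective, so `R = A`.
-/

open Module

theorem Submodule.eq_ker_of_le_ker_of_finrank_quotient_eq {K V W : Type*} [Field K]
    [AddCommGroup V] [Module K V] [AddCommGroup W] [Module K W] [FiniteDimensional K W]
    (p : Submodule K V) [FiniteDimensional K (V ⧸ p)] (φ : V →ₗ[K] W)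
    (hφ : Function.Surjective φ) (hle : p ≤ LinearMap.ker φ)
    (hrank : finrank K (V ⧸ p) = finrank K W) : p = LinearMap.ker φ := by
  have hlift_surj : Function.Surjective (p.liftQ φ hle) := by
    rw [← LinearMap.range_eq_top, Submodule.range_liftQ, LinearMap.range_eq_top.mpr hφ]
  have hlift_inj : Function.Injective (p.liftQ φ hle) :=
    (LinearMap.injective_iff_surjective_of_finrank_eq_finrank hrank).mpr hlift_surj
  refine le_antisymm hle fun x hx => ?_
  rw [← Submodule.Quotient.mk_eq_zero]
  exact hlift_inj (by simpa using hx)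

theorem Submodule.mem_span_one_iff_forall_eq {R ι : Type*} [Semiring R] {x : ι → R} :
    x ∈ R ∙ (1 : ι → R) ↔ ∀ i j, x i = x j := by
  refine ⟨fun hx i j => ?_, fun hx => ?_⟩
  · obtain ⟨a, rfl⟩ := Submodule.mem_span_singleton.mp hx
    simp
  · rcases isEmpty_or_nonempty ι with hι | ⟨⟨i₀⟩⟩
    · simp [Subsingleton.elim x 0]
    · exact Submodule.mem_span_singleton.mpr ⟨x i₀, funext fun i => by simp [hx i₀ i]⟩

theorem finrank_quotient_span_one {K ι : Type*} [Field K] [Fintype ι] :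
    finrank K ((ι → K) ⧸ K ∙ (1 : ι → K)) = Fintype.card ι - 1 := by
  rcases isEmpty_or_nonempty ι with hι | hι
  · simp [finrank_zero_of_subsingleton]
  · have h := Submodule.finrank_quotient_add_finrank (K ∙ (1 : ι → K))
    rw [finrank_span_singleton one_ne_zero, finrank_fintype_fun_eq_card] at h
    omega

namespace PowerSeries

noncomputable def constantCoeffs (ι K : Type*) [CommRing K] : (ι → K⟦X⟧) →ₗ[K] (ι → K) :=
  LinearMap.piMap fun _ => coeff 0

@[simp]
theorem constantCoeffs_apply {ι K : Type*} [CommRing K] (f : ι → K⟦X⟧) (i : ι) :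
    constantCoeffs ι K f i = constantCoeff (f i) :=
  coeff_zero_eq_constantCoeff_apply (f i)

theorem constantCoeffs_surjective (ι K : Type*) [CommRing K] :
    Function.Surjective (constantCoeffs ι K) :=
  fun x => ⟨fun i => C (x i), funext fun i => by simp⟩

noncomputable def constantCoeffsModDiagonal (ι K : Type*) [CommRing K] :
    (ι → K⟦X⟧) →ₗ[K] (ι → K) ⧸ K ∙ (1 : ι → K) :=
  (K ∙ (1 : ι → K)).mkQ ∘ₗ constantCoeffs ι K

theorem mem_ker_constantCoeffsModDiagonal {ι K : Type*} [CommRing K] {f : ι → K⟦X⟧} :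
    f ∈ LinearMap.ker (constantCoeffsModDiagonal ι K) ↔
      ∀ i j, constantCoeff (f i) = constantCoeff (f j) := by
  simp [constantCoeffsModDiagonal, Submodule.mem_span_one_iff_forall_eq]

theorem constantCoeffsModDiagonal_surjective (ι K : Type*) [CommRing K] :
    Function.Surjective (constantCoeffsModDiagonal ι K) :=
  (Submodule.mkQ_surjective _).comp (constantCoeffs_surjective ι K)

end PowerSeries

theorem genus_zero_singularity_is_rational_mfold_general
    {k : Type*} [Field k] {m : ℕ}
    (R : Subalgebra k (Fin m → PowerSeries k))
    (hloc : ∀ f ∈ R, ∀ i j : Fin m,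
      PowerSeries.constantCoeff (f i) = PowerSeries.constantCoeff (f j))
    (hδ : Module.finrank k ((Fin m → PowerSeries k) ⧸ R.toSubmodule) = m - 1)
    (hfin : Module.Finite k ((Fin m → PowerSeries k) ⧸ R.toSubmodule)) :
    (R : Set (Fin m → PowerSeries k)) =
      {f | ∀ i j : Fin m,
        PowerSeries.constantCoeff (f i) = PowerSeries.constantCoeff (f j)} := by
  have hR : R.toSubmodule = LinearMap.ker (PowerSeries.constantCoeffsModDiagonal (Fin m) k) :=
    R.toSubmodule.eq_ker_of_le_ker_of_finrank_quotient_eq _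
      (PowerSeries.constantCoeffsModDiagonal_surjective _ _)
      (fun f hf => PowerSeries.mem_ker_constantCoeffsModDiagonal.mpr (hloc f hf))
      (by rw [hδ, finrank_quotient_span_one, Fintype.card_fin])
  ext f
  exact (SetLike.ext_iff.mp hR f).trans PowerSeries.mem_ker_constantCoeffsModDiagonal

/-- A reduced curve singularity of genus zero with `m` branches is the rational
`m`-fold point: if `R ⊆ k[[t₁]] ⊕ ⋯ ⊕ k[[t_m]]` is the local ring of a reduced
curve singularity (every element of `R` has equal constant terms on all branches)
with `δ = dim_k (R̃/R) = m - 1` (i.e. genus `g = δ - m + 1 = 0`), then `R` consists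
exactly of all tuples of power series with equal constant terms. -/
theorem genus_zero_singularity_is_rational_mfold
    {k : Type*} [Field k] [IsAlgClosed k] {m : ℕ} (hm : 0 < m)
    (R : Subalgebra k (Fin m → PowerSeries k))
    (hloc : ∀ f ∈ R, ∀ i j : Fin m,
      PowerSeries.constantCoeff (f i) = PowerSeries.constantCoeff (f j))
    (hδ : Module.finrank k ((Fin m → PowerSeries k) ⧸ R.toSubmodule) = m - 1)
    (hfin : Module.Finite k ((Fin m → PowerSeries k) ⧸ R.toSubmodule)) :
    (R : Set (Fin m → PowerSeries k)) =
      {f | ∀ i j : Fin m,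
        PowerSeries.constantCoeff (f i) = PowerSeries.constantCoeff (f j)} :=
  genus_zero_singularity_is_rational_mfold_general R hloc hδ hfin
end

section
/- Let R ⊆ R̃ = k[[t₁]] ⊕ ... ⊕ k[[t_m]] be a reduced complete local curve singularity with maximal ideal m_R = m_{R̃} ∩ R. Define the graded pieces (R̃/R)^i = m_{R̃}^i / ((m_{R̃}^i ∩ R) + m_{R̃}^{i+1}) for i ≥ 0. If (R̃/R)^i = 0 and (R̃/R)^j = 0 for some i,j ≥ 1, then (R̃/R)^{i+j} = 0. -/
/-- The maximal ideal `m_R̃ = (t₁) ⊕ ⋯ ⊕ (t_m)` of `R̃ = k[[t₁]] ⊕ ⋯ ⊕ k[[t_m]]`,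
the kernel of the evaluation (constant term) map to `k^m`. -/
noncomputable def maxIdealTilde (k : Type*) [Field k] (m : ℕ) : Ideal (Fin m → PowerSeries k) :=
  RingHom.ker (Pi.ringHom (fun i =>
    (PowerSeries.constantCoeff : PowerSeries k →+* k).comp (Pi.evalRingHom (fun _ => PowerSeries k) i)))

/-!
If `r ∈ R ∩ m^i` and `s ∈ R ∩ m^j` satisfy `a - r ∈ m^{i+1}` and `b - s ∈ m^{j+1}`, then
`a * b - r * s = (a - r) * b + r * (b - s) ∈ m^{i+j+1}`, so `r * s ∈ R ∩ m^{i+j}`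
represents `a * b` in degree `i + j`. Since `m^{i+j}` is additively generated by such products
and representability in a fixed degree is closed under sums, every element of `m^{i+j}` is
represented.
-/

namespace Ideal

variable {A : Type*} [CommRing A] (I : Ideal A)

theorem mul_mem_pow_add {a b : A} {p q : ℕ} (ha : a ∈ I ^ p) (hb : b ∈ I ^ q) :
    a * b ∈ I ^ (p + q) :=
  pow_add I p q ▸ mul_mem_mul ha hb

variable {S : Type*} [SetLike S A]

/-- The class of `f` in `I ^ n / I ^ (n + 1)` is the class of an element of `R ∩ I ^ n`. -/
def RepresentedInDegree (R : S) (n : ℕ) (f : A) : Prop :=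
  ∃ r ∈ R, r ∈ I ^ n ∧ f - r ∈ I ^ (n + 1)

variable {I} {R : S}

theorem RepresentedInDegree.add [AddMemClass S A] {n : ℕ} {f g : A}
    (hf : I.RepresentedInDegree R n f) (hg : I.RepresentedInDegree R n g) :
    I.RepresentedInDegree R n (f + g) := by
  obtain ⟨r, hrR, hrI, hfr⟩ := hf
  obtain ⟨s, hsR, hsI, hgs⟩ := hg
  refine ⟨r + s, add_mem hrR hsR, add_mem hrI hsI, ?_⟩
  rw [add_sub_add_comm]
  exact add_mem hfr hgs

theorem RepresentedInDegree.mul [MulMemClass S A] {i j : ℕ} {a b : A}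
    (ha : I.RepresentedInDegree R i a) (hb_mem : b ∈ I ^ j) (hb : I.RepresentedInDegree R j b) :
    I.RepresentedInDegree R (i + j) (a * b) := by
  obtain ⟨r, hrR, hrI, har⟩ := ha
  obtain ⟨s, hsR, hsI, hbs⟩ := hb
  refine ⟨r * s, mul_mem hrR hsR, I.mul_mem_pow_add hrI hsI, ?_⟩
  have hsplit : a * b - r * s = (a - r) * b + r * (b - s) := by ring
  rw [hsplit]
  refine add_mem ?_ ?_
  · simpa only [add_right_comm i 1 j] using I.mul_mem_pow_add har hb_mem
  · simpa only [add_assoc] using I.mul_mem_pow_add hrI hbs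

theorem representedInDegree_add [AddMemClass S A] [MulMemClass S A] {i j : ℕ}
    (hi : ∀ a ∈ I ^ i, I.RepresentedInDegree R i a)
    (hj : ∀ b ∈ I ^ j, I.RepresentedInDegree R j b) :
    ∀ f ∈ I ^ (i + j), I.RepresentedInDegree R (i + j) f := by
  intro f hf
  rw [pow_add] at hf
  exact Submodule.mul_induction_on hf (fun a ha b hb => (hi a ha).mul hb (hj b hb))
    fun _ _ => RepresentedInDegree.add

end Ideal

theorem graded_piece_vanishing_mul_general
    {k : Type*} [Field k] {m : ℕ}
    (R : Subalgebra k (Fin m → PowerSeries k))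
    (i j : ℕ)
    (hi : ∀ f ∈ (maxIdealTilde k m) ^ i, ∃ r ∈ R,
      r ∈ (maxIdealTilde k m) ^ i ∧ f - r ∈ (maxIdealTilde k m) ^ (i + 1))
    (hj : ∀ f ∈ (maxIdealTilde k m) ^ j, ∃ r ∈ R,
      r ∈ (maxIdealTilde k m) ^ j ∧ f - r ∈ (maxIdealTilde k m) ^ (j + 1)) :
    ∀ f ∈ (maxIdealTilde k m) ^ (i + j), ∃ r ∈ R,
      r ∈ (maxIdealTilde k m) ^ (i + j) ∧ f - r ∈ (maxIdealTilde k m) ^ (i + j + 1) :=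
  Ideal.representedInDegree_add hi hj

/-- Multiplicativity of the vanishing of graded pieces: with
`(R̃/R)^i = m_R̃^i / ((m_R̃^i ∩ R) + m_R̃^{i+1})`, if `(R̃/R)^i = 0` and `(R̃/R)^j = 0`
for some `i, j ≥ 1`, then `(R̃/R)^{i+j} = 0`. Vanishing of `(R̃/R)^n` is expressed as:
every element of `m_R̃^n` is congruent modulo `m_R̃^{n+1}` to an element of `R ∩ m_R̃^n`. -/
theorem graded_piece_vanishing_mul
    {k : Type*} [Field k] {m : ℕ}
    (R : Subalgebra k (Fin m → PowerSeries k))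
    (i j : ℕ) (hi1 : 1 ≤ i) (hj1 : 1 ≤ j)
    (hi : ∀ f ∈ (maxIdealTilde k m) ^ i, ∃ r ∈ R,
      r ∈ (maxIdealTilde k m) ^ i ∧ f - r ∈ (maxIdealTilde k m) ^ (i + 1))
    (hj : ∀ f ∈ (maxIdealTilde k m) ^ j, ∃ r ∈ R,
      r ∈ (maxIdealTilde k m) ^ j ∧ f - r ∈ (maxIdealTilde k m) ^ (j + 1)) :
    ∀ f ∈ (maxIdealTilde k m) ^ (i + j), ∃ r ∈ R,
      r ∈ (maxIdealTilde k m) ^ (i + j) ∧ f - r ∈ (maxIdealTilde k m) ^ (i + j + 1) :=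
  graded_piece_vanishing_mul_general R i j hi hj
end

section
/- If R ⊆ R̃ = ⊕ᵢ₌₁^m k[[tᵢ]] is a curve singularity of genus 1 (δ = m), then dim_k (R̃/R)^1 = 1 and (R̃/R)^i = 0 for all i ≥ 2; in particular m_R ⊇ m_{R̃}² and m_R/m_{R̃}² is a codimension-one subspace of m_{R̃}/m_{R̃}². -/
/-- `m_R̃^i` as a `k`-subspace of `R̃`. -/
noncomputable def filt (k : Type*) [Field k] (m : ℕ) (i : ℕ) :
    Submodule k (Fin m → PowerSeries k) :=
  Submodule.restrictScalars k ((maxIdealTilde k m) ^ i)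

/-- `dim_k (R̃/R)^i` where `(R̃/R)^i = m_R̃^i / ((m_R̃^i ∩ R) + m_R̃^{i+1})`. -/
noncomputable def gradedDim {k : Type*} [Field k] {m : ℕ}
    (R : Subalgebra k (Fin m → PowerSeries k)) (i : ℕ) : ℕ :=
  Module.finrank k
    (↥(filt k m i) ⧸ (Submodule.comap (filt k m i).subtype
      ((filt k m i ⊓ R.toSubmodule) ⊔ filt k m (i + 1))))

open PowerSeries

theorem Subalgebra.exists_aeval_mul_mem {k A : Type*} [Field k] [CommRing A] [Algebra k A]
    (R : Subalgebra k A) [Module.Finite k (A ⧸ R.toSubmodule)] {a : A} (ha : a ∈ R) :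
    ∃ p : Polynomial k, p ≠ 0 ∧ ∀ x, Polynomial.aeval a p * x ∈ R := by
  obtain ⟨T, hT⟩ : ∃ T : Module.End k (A ⧸ R.toSubmodule),
      ∀ x, T (R.toSubmodule.mkQ x) = R.toSubmodule.mkQ (a * x) :=
    ⟨R.toSubmodule.mapQ _ (Algebra.lmul k A a) fun x hx => R.mul_mem ha hx, fun _ => rfl⟩
  have hT_pow (n : ℕ) (x : A) :
      (T ^ n) (R.toSubmodule.mkQ x) = R.toSubmodule.mkQ (a ^ n * x) := by
    induction n generalizing x with
    | zero => simp
    | succ n ih => rw [pow_succ, Module.End.mul_apply, hT, ih, ← mul_assoc, ← pow_succ]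
  have hT_aeval (p : Polynomial k) (x : A) :
      Polynomial.aeval T p (R.toSubmodule.mkQ x) =
        R.toSubmodule.mkQ (Polynomial.aeval a p * x) := by
    induction p using Polynomial.induction_on' with
    | add p q hp hq => simp only [map_add, LinearMap.add_apply, hp, hq, add_mul]
    | monomial n c =>
      simp only [Polynomial.aeval_monomial, Module.End.mul_apply, Module.algebraMap_end_apply,
        hT_pow, ← map_smul, Algebra.smul_def, mul_assoc]
  refine ⟨T.charpoly, (LinearMap.charpoly_monic T).ne_zero, fun x => ?_⟩
  have hchar := hT_aeval T.charpoly x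
  rw [LinearMap.aeval_self_charpoly, LinearMap.zero_apply, eq_comm] at hchar
  exact (Submodule.Quotient.mk_eq_zero _).mp hchar

theorem PowerSeries.constantCoeff_aeval {R : Type*} [CommRing R] {φ : PowerSeries R}
    (hφ : constantCoeff φ = 0) (p : Polynomial R) :
    constantCoeff (Polynomial.aeval φ p) = p.coeff 0 := by
  rw [Polynomial.aeval_def, Polynomial.hom_eval₂, hφ]
  simp [Polynomial.coeff_zero_eq_eval_zero]

theorem Submodule.map_mkQ_eq_bot_iff {R M : Type*} [Ring R] [AddCommGroup M] [Module R M]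
    {p p' : Submodule R M} : Submodule.map p.mkQ p' = ⊥ ↔ p' ≤ p := by
  rw [← le_bot_iff, Submodule.map_le_iff_le_comap, Submodule.comap_bot, Submodule.ker_mkQ]

section Filtration

variable {k : Type*} [Field k] {m : ℕ}

theorem mem_maxIdealTilde {f : Fin m → PowerSeries k} :
    f ∈ maxIdealTilde k m ↔ ∀ i, constantCoeff (f i) = 0 := by
  simp only [maxIdealTilde, RingHom.mem_ker, funext_iff]
  rfl

theorem maxIdealTilde_eq_span :
    maxIdealTilde k m = Ideal.span {fun _ => (X : PowerSeries k)} := by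
  ext f
  rw [mem_maxIdealTilde, Ideal.mem_span_singleton']
  refine ⟨fun h => ?_, ?_⟩
  · choose g hg using fun i => X_dvd_iff.mpr (h i)
    exact ⟨g, funext fun i => (hg i).trans (mul_comm _ _) |>.symm⟩
  · rintro ⟨g, rfl⟩ i
    simp

theorem mem_filt {n : ℕ} {f : Fin m → PowerSeries k} :
    f ∈ filt k m n ↔ ∃ g, g * (fun _ => X) ^ n = f := by
  rw [filt, Submodule.restrictScalars_mem, maxIdealTilde_eq_span, Ideal.span_singleton_pow,
    Ideal.mem_span_singleton']

theorem filt_mul (a b : ℕ) : filt k m a * filt k m b = filt k m (a + b) := by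
  rw [filt, filt, filt, pow_add]
  rfl

theorem filt_antitone : Antitone (filt k m) :=
  fun _ _ h _ hx => Ideal.pow_le_pow_right h hx

theorem mul_mem_filt {a b : ℕ} {x y : Fin m → PowerSeries k} (hx : x ∈ filt k m a)
    (hy : y ∈ filt k m b) : x * y ∈ filt k m (a + b) :=
  filt_mul (k := k) (m := m) a b ▸ Submodule.mul_mem_mul hx hy

noncomputable def constCoeffMap (k : Type*) [Field k] (m : ℕ) :
    (Fin m → PowerSeries k) →ₗ[k] (Fin m → k) :=
  (coeff (R := k) 0).compLeft (Fin m)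

theorem ker_constCoeffMap : LinearMap.ker (constCoeffMap k m) = filt k m 1 := by
  ext f
  rw [LinearMap.mem_ker, filt, pow_one, Submodule.restrictScalars_mem, mem_maxIdealTilde,
    funext_iff]
  simp [constCoeffMap]

theorem constCoeffMap_surjective : Function.Surjective (constCoeffMap k m) :=
  fun c => ⟨fun i => C (c i), funext fun i => by simp [constCoeffMap]⟩

variable (R : Subalgebra k (Fin m → PowerSeries k))

theorem filt_one_sup_eq_comap (hm : 0 < m)
    (hloc : ∀ f ∈ R, ∀ i j : Fin m, constantCoeff (f i) = constantCoeff (f j)) :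
    filt k m 1 ⊔ R.toSubmodule = (Submodule.span k {1}).comap (constCoeffMap k m) := by
  apply le_antisymm
  · refine sup_le (fun f hf => ?_) (fun f hf => ?_)
    · rw [← ker_constCoeffMap] at hf
      simp [Submodule.mem_comap, LinearMap.mem_ker.mp hf]
    · refine Submodule.mem_span_singleton.mpr
        ⟨constantCoeff (f ⟨0, hm⟩), funext fun i => ?_⟩
      simp [constCoeffMap, hloc f hf i ⟨0, hm⟩]
  · intro f hf
    obtain ⟨c, hc⟩ := Submodule.mem_span_singleton.mp hf
    have hconst : f - algebraMap k _ c ∈ filt k m 1 := by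
      rw [← ker_constCoeffMap, LinearMap.mem_ker, map_sub, ← hc]
      funext i
      simp [constCoeffMap]
    have hc : algebraMap k _ c ∈ R.toSubmodule := R.algebraMap_mem c
    simpa using Submodule.add_mem_sup hconst hc

theorem finrank_quotient_filt_one_sup (hm : 0 < m)
    (hloc : ∀ f ∈ R, ∀ i j : Fin m, constantCoeff (f i) = constantCoeff (f j)) :
    Module.finrank k ((Fin m → PowerSeries k) ⧸ (filt k m 1 ⊔ R.toSubmodule)) = m - 1 := by
  let D := Submodule.span k {(1 : Fin m → k)}
  have hD : Module.finrank k D = 1 :=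
    finrank_span_singleton fun h => one_ne_zero (congrFun h ⟨0, hm⟩)
  have hsurj : Function.Surjective (D.mkQ ∘ₗ constCoeffMap k m) :=
    D.mkQ_surjective.comp constCoeffMap_surjective
  have hker : LinearMap.ker (D.mkQ ∘ₗ constCoeffMap k m) = filt k m 1 ⊔ R.toSubmodule := by
    rw [LinearMap.ker_comp, Submodule.ker_mkQ, filt_one_sup_eq_comap R hm hloc]
  have hquot := D.finrank_quotient_add_finrank
  rw [hD, Module.finrank_fin_fun] at hquot
  rw [← hker, (LinearMap.quotKerEquivOfSurjective _ hsurj).finrank_eq]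
  omega

theorem finrank_map_mkQ_filt_one (hm : 0 < m)
    (hloc : ∀ f ∈ R, ∀ i j : Fin m, constantCoeff (f i) = constantCoeff (f j))
    [Module.Finite k ((Fin m → PowerSeries k) ⧸ R.toSubmodule)]
    (hδ : Module.finrank k ((Fin m → PowerSeries k) ⧸ R.toSubmodule) = m) :
    Module.finrank k (Submodule.map R.toSubmodule.mkQ (filt k m 1)) = 1 := by
  have hquot := (Submodule.map R.toSubmodule.mkQ (filt k m 1)).finrank_quotient_add_finrank
  rw [(Submodule.quotientQuotientEquivQuotientSup _ _).finrank_eq, sup_comm,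
    finrank_quotient_filt_one_sup R hm hloc, hδ] at hquot
  omega

theorem not_filt_one_le (hm : 0 < m)
    (hloc : ∀ f ∈ R, ∀ i j : Fin m, constantCoeff (f i) = constantCoeff (f j))
    (hδ : Module.finrank k ((Fin m → PowerSeries k) ⧸ R.toSubmodule) = m) :
    ¬ filt k m 1 ≤ R.toSubmodule := by
  intro h
  have := finrank_quotient_filt_one_sup R hm hloc
  rw [sup_eq_right.mpr h, hδ] at this
  omega

theorem filt_add_le_sup {i j : ℕ} (hi : filt k m i ≤ R.toSubmodule ⊔ filt k m (i + 1))
    (hj : filt k m j ≤ R.toSubmodule ⊔ filt k m (j + 1)) :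
    filt k m (i + j) ≤ R.toSubmodule ⊔ filt k m (i + j + 1) := by
  rw [← filt_mul, Submodule.mul_le]
  intro x hx y hy
  obtain ⟨r, hrR, q, hq, hrq⟩ := Submodule.mem_sup.mp (hi hx)
  obtain ⟨s, hsR, z, hz, hsz⟩ := Submodule.mem_sup.mp (hj hy)
  have hr : r ∈ filt k m i := by
    rw [eq_sub_of_add_eq hrq]
    exact sub_mem hx (filt_antitone i.le_succ hq)
  have hxy : x * y = r * s + (r * z + q * y) := by rw [← hrq, ← hsz]; ring
  rw [hxy]
  refine Submodule.add_mem_sup (R.mul_mem hrR hsR) (add_mem ?_ ?_)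
  · rw [add_assoc]
    exact mul_mem_filt hr hz
  · simpa only [Nat.add_right_comm] using mul_mem_filt hq hy

theorem filt_one_le_sup_filt (h : filt k m 1 ≤ R.toSubmodule ⊔ filt k m 2) (n : ℕ) :
    filt k m 1 ≤ R.toSubmodule ⊔ filt k m (n + 1) := by
  have hsucc (n : ℕ) : filt k m (n + 1) ≤ R.toSubmodule ⊔ filt k m (n + 2) := by
    induction n with
    | zero => exact h
    | succ n ih => exact filt_add_le_sup R ih h
  induction n with
  | zero => exact le_sup_right
  | succ n ih => exact ih.trans (sup_le le_sup_left (hsucc n))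

theorem exists_filt_le_of_X_mul_mem [Module.Finite k ((Fin m → PowerSeries k) ⧸ R.toSubmodule)]
    {w : Fin m → PowerSeries k} (hw : IsUnit w) (ha : (fun _ => X) * w ∈ R) :
    ∃ N, filt k m N ≤ R.toSubmodule := by
  obtain ⟨p, hp, hpR⟩ := R.exists_aeval_mul_mem ha
  obtain ⟨e, q, hpq, hq⟩ : ∃ e q, p = Polynomial.X ^ e * q ∧ q.coeff 0 ≠ 0 := by
    obtain ⟨q, hpq, hq⟩ := p.exists_eq_pow_rootMultiplicity_mul_and_not_dvd hp 0
    rw [map_zero, sub_zero] at hpq hq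
    exact ⟨_, q, hpq, mt Polynomial.X_dvd_iff.mpr hq⟩
  have hqa : IsUnit (Polynomial.aeval ((fun _ => X) * w) q) := by
    refine Pi.isUnit_iff.mpr fun i => isUnit_iff_constantCoeff.mpr ?_
    rw [Polynomial.aeval_pi_apply₂, constantCoeff_aeval (by simp)]
    exact hq.isUnit
  obtain ⟨v, hv⟩ := ((hw.pow e).mul hqa).exists_left_inv
  refine ⟨e, fun f hf => ?_⟩
  obtain ⟨g, rfl⟩ := mem_filt.mp hf
  show _ ∈ R
  convert hpR (v * g) using 1
  rw [hpq, map_mul, map_pow, Polynomial.aeval_X]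
  linear_combination (-(fun _ => X) ^ e * g) * hv

theorem filt_one_le_of_le_sup_filt_two
    [Module.Finite k ((Fin m → PowerSeries k) ⧸ R.toSubmodule)]
    (h : filt k m 1 ≤ R.toSubmodule ⊔ filt k m 2) : filt k m 1 ≤ R.toSubmodule := by
  obtain ⟨a, haR, q, hq, haq⟩ :=
    Submodule.mem_sup.mp (h (mem_filt.mpr ⟨1, by rw [one_mul, pow_one]⟩))
  obtain ⟨g, rfl⟩ := mem_filt.mp hq
  have hw : IsUnit (1 - g * fun _ => X) :=
    Pi.isUnit_iff.mpr fun i => isUnit_iff_constantCoeff.mpr (by simp)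
  have ha : (fun _ => X) * (1 - g * fun _ => X) = a := by linear_combination -haq
  obtain ⟨N, hN⟩ := exists_filt_le_of_X_mul_mem R hw (ha ▸ haR)
  exact (filt_one_le_sup_filt R h N).trans (sup_le le_rfl ((filt_antitone N.le_succ).trans hN))

theorem filt_two_le (hm : 0 < m)
    (hloc : ∀ f ∈ R, ∀ i j : Fin m, constantCoeff (f i) = constantCoeff (f j))
    [Module.Finite k ((Fin m → PowerSeries k) ⧸ R.toSubmodule)]
    (hδ : Module.finrank k ((Fin m → PowerSeries k) ⧸ R.toSubmodule) = m) :
    filt k m 2 ≤ R.toSubmodule := by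
  have hlt : Submodule.map R.toSubmodule.mkQ (filt k m 2) <
      Submodule.map R.toSubmodule.mkQ (filt k m 1) := by
    refine lt_of_le_of_ne (Submodule.map_mono (filt_antitone one_le_two)) fun h => ?_
    refine not_filt_one_le R hm hloc hδ (filt_one_le_of_le_sup_filt_two R ?_)
    rw [← Submodule.comap_map_mkQ, ← Submodule.map_le_iff_le_comap, h]
  have hrank := Submodule.finrank_lt_finrank_of_lt hlt
  rwa [finrank_map_mkQ_filt_one R hm hloc hδ, Nat.lt_one_iff, Submodule.finrank_eq_zero,
    Submodule.map_mkQ_eq_bot_iff] at hrank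

theorem gradedDim_eq_finrank_map_mkQ {i : ℕ} (h : filt k m (i + 1) ≤ R.toSubmodule) :
    gradedDim R i = Module.finrank k (Submodule.map R.toSubmodule.mkQ (filt k m i)) := by
  have hker : LinearMap.ker (R.toSubmodule.mkQ ∘ₗ (filt k m i).subtype) =
      (filt k m i ⊓ R.toSubmodule ⊔ filt k m (i + 1)).comap (filt k m i).subtype := by
    rw [sup_eq_left.mpr (le_inf (filt_antitone i.le_succ) h)]
    ext x
    simp
  rw [gradedDim, ← hker, (LinearMap.quotKerEquivRange _).finrank_eq, LinearMap.range_comp,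
    Submodule.range_subtype]

end Filtration

theorem genus_one_filtration_general
    {k : Type*} [Field k] {m : ℕ} (hm : 0 < m)
    (R : Subalgebra k (Fin m → PowerSeries k))
    (hloc : ∀ f ∈ R, ∀ i j : Fin m,
      (PowerSeries.constantCoeff : PowerSeries k →+* k) (f i) = (PowerSeries.constantCoeff : PowerSeries k →+* k) (f j))
    (hfin : Module.Finite k ((Fin m → PowerSeries k) ⧸ R.toSubmodule))
    (hδ : Module.finrank k ((Fin m → PowerSeries k) ⧸ R.toSubmodule) = m) :
    gradedDim R 1 = 1 ∧ (∀ i : ℕ, 2 ≤ i → gradedDim R i = 0) ∧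
      filt k m 2 ≤ R.toSubmodule := by
  have h2 : filt k m 2 ≤ R.toSubmodule := filt_two_le R hm hloc hδ
  refine ⟨?_, fun i hi => ?_, h2⟩
  · rw [gradedDim_eq_finrank_map_mkQ R h2, finrank_map_mkQ_filt_one R hm hloc hδ]
  · have hi : filt k m i ≤ R.toSubmodule := (filt_antitone hi).trans h2
    rw [gradedDim_eq_finrank_map_mkQ R ((filt_antitone i.le_succ).trans hi),
      Submodule.map_mkQ_eq_bot_iff.mpr hi, finrank_bot]

/-- For a curve singularity `R ⊆ R̃ = ⊕ᵢ₌₁^m k[[tᵢ]]` of genus one (δ = m):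
`dim_k (R̃/R)^1 = 1`, `(R̃/R)^i = 0` for all `i ≥ 2`, and `m_R̃² ⊆ R` (so that
`m_R/m_R̃²` is a codimension-one subspace of `m_R̃/m_R̃²`). -/
theorem genus_one_filtration
    {k : Type*} [Field k] [IsAlgClosed k] {m : ℕ} (hm : 0 < m)
    (R : Subalgebra k (Fin m → PowerSeries k))
    (hloc : ∀ f ∈ R, ∀ i j : Fin m,
      (PowerSeries.constantCoeff : PowerSeries k →+* k) (f i) = (PowerSeries.constantCoeff : PowerSeries k →+* k) (f j))
    (hfin : Module.Finite k ((Fin m → PowerSeries k) ⧸ R.toSubmodule))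
    (hδ : Module.finrank k ((Fin m → PowerSeries k) ⧸ R.toSubmodule) = m) :
    gradedDim R 1 = 1 ∧ (∀ i : ℕ, 2 ≤ i → gradedDim R i = 0) ∧
      filt k m 2 ≤ R.toSubmodule :=
  genus_one_filtration_general hm R hloc hfin hδ
end
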